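/- arXiv:1702.01436 — 2 statements merged into one kernel-verified Lean document; each statement's English description precedes it below -/
import Mathlib

section
/- Auxiliary inequalities for r = 3: for all odd k ≥ 3, writing f_{k} := f_{k,3}^{{a}}, the strict inequality 2·f_{k-1} < f_{k} + f_{k-2} holds, and the equality 2·f_{k} = f_{k+1} + f_{k-1} holds. -/
open Finset

/-- Fitch's parsimony operation: intersection if nonempty, otherwise union. -/
def fitchOp {α : Type*} [DecidableEq α] (B C : Finset α) : Finset α :=
  if (B ∩ C).Nonempty then B ∩ C else B ∪ C

/-- `fCS a R k A` is `f_{k,r}^A`: the minimum number of leaves of the fully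
bifurcating tree `T_k` that must be assigned state `a` in order for the Fitch
root state set to equal `A`, defined by the standard-decomposition recursion,
with base case `f_{0,r}^{{x}} = 1` if `x = a` and `0` otherwise. -/
noncomputable def fCS {α : Type*} [DecidableEq α] (a : α) (R : Finset α) :
    ℕ → Finset α → ℕ
  | 0, A => if a ∈ A then 1 else 0
  | (k+1), A => sInf {n : ℕ | ∃ B C : Finset α, B ⊆ R ∧ C ⊆ R ∧
      B.Nonempty ∧ C.Nonempty ∧ B.card ≤ 2 ^ k ∧ C.card ≤ 2 ^ k ∧
      fitchOp B C = A ∧ n = fCS a R k B + fCS a R k C}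

namespace FitchAux

noncomputable def g (k : ℕ) (A : Finset (Fin 3)) : ℕ := fCS 0 {0,1,2} k A

lemma fCS_succ {α : Type*} [DecidableEq α] (a : α) (R : Finset α) (k : ℕ) (A : Finset α) :
    fCS a R (k+1) A = sInf {n : ℕ | ∃ B C : Finset α, B ⊆ R ∧ C ⊆ R ∧
      B.Nonempty ∧ C.Nonempty ∧ B.card ≤ 2 ^ k ∧ C.card ≤ 2 ^ k ∧
      fitchOp B C = A ∧ n = fCS a R k B + fCS a R k C} := rfl

lemma sub3 (B : Finset (Fin 3)) : B ⊆ {0,1,2} := by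
  intro x _; fin_cases x <;> simp

lemma card_le_pow {k : ℕ} (hk : 2 ≤ k) (B : Finset (Fin 3)) : B.card ≤ 2^k := by
  have h1 : B.card ≤ 3 := le_trans (Finset.card_le_univ B) (by simp)
  have h2 : (2:ℕ)^2 ≤ 2^k := Nat.pow_le_pow_right (by norm_num) hk
  omega

lemma g_le {k : ℕ} {A B C : Finset (Fin 3)} (hBn : B.Nonempty) (hCn : C.Nonempty)
    (hBc : B.card ≤ 2^k) (hCc : C.card ≤ 2^k) (hf : fitchOp B C = A) :
    g (k+1) A ≤ g k B + g k C := by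
  rw [g, fCS_succ]
  exact Nat.sInf_le ⟨B, C, sub3 B, sub3 C, hBn, hCn, hBc, hCc, hf, rfl⟩

lemma g_decomp {k : ℕ} {A B₀ C₀ : Finset (Fin 3)} (hBn : B₀.Nonempty) (hCn : C₀.Nonempty)
    (hBc : B₀.card ≤ 2^k) (hCc : C₀.card ≤ 2^k) (hf : fitchOp B₀ C₀ = A) :
    ∃ B C : Finset (Fin 3), B.Nonempty ∧ C.Nonempty ∧ B.card ≤ 2^k ∧ C.card ≤ 2^k ∧
      fitchOp B C = A ∧ g (k+1) A = g k B + g k C := by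
  have h := Nat.sInf_mem (s := {n : ℕ | ∃ B C : Finset (Fin 3), B ⊆ {0,1,2} ∧ C ⊆ {0,1,2} ∧
      B.Nonempty ∧ C.Nonempty ∧ B.card ≤ 2 ^ k ∧ C.card ≤ 2 ^ k ∧
      fitchOp B C = A ∧ n = fCS 0 {0,1,2} k B + fCS 0 {0,1,2} k C})
      ⟨_, B₀, C₀, sub3 B₀, sub3 C₀, hBn, hCn, hBc, hCc, hf, rfl⟩
  obtain ⟨B, C, -, -, h3, h4, h5, h6, h7, h8⟩ := h
  exact ⟨B, C, h3, h4, h5, h6, h7, by rw [g, fCS_succ]; exact h8⟩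

/-! classification lemmas -/

lemma cls_a : ∀ B C : Finset (Fin 3), B ≠ ∅ → C ≠ ∅ → fitchOp B C = {0} →
    (B, C) ∈ ([({0},{0}), ({0},{0,1}), ({0,1},{0}), ({0},{0,2}), ({0,2},{0}),
      ({0},{0,1,2}), ({0,1,2},{0}), ({0,1},{0,2}), ({0,2},{0,1})] :
      List (Finset (Fin 3) × Finset (Fin 3))) := by decide

lemma cls_ab : ∀ B C : Finset (Fin 3), B ≠ ∅ → C ≠ ∅ → fitchOp B C = {0,1} →
    (B, C) ∈ ([({0,1},{0,1}), ({0,1},{0,1,2}), ({0,1,2},{0,1}),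
      ({0},{1}), ({1},{0})] : List (Finset (Fin 3) × Finset (Fin 3))) := by decide

lemma cls_ac : ∀ B C : Finset (Fin 3), B ≠ ∅ → C ≠ ∅ → fitchOp B C = {0,2} →
    (B, C) ∈ ([({0,2},{0,2}), ({0,2},{0,1,2}), ({0,1,2},{0,2}),
      ({0},{2}), ({2},{0})] : List (Finset (Fin 3) × Finset (Fin 3))) := by decide

lemma cls_t : ∀ B C : Finset (Fin 3), B ≠ ∅ → C ≠ ∅ → fitchOp B C = {0,1,2} →
    (B, C) ∈ ([({0},{1,2}), ({1,2},{0}), ({1},{0,2}), ({0,2},{1}), ({2},{0,1}),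
      ({0,1},{2}), ({0,1,2},{0,1,2})] : List (Finset (Fin 3) × Finset (Fin 3))) := by decide

lemma cls2_ab : ∀ B C : Finset (Fin 3), B ≠ ∅ → C ≠ ∅ → B.card ≤ 2^1 → C.card ≤ 2^1 →
    fitchOp B C = {0,1} →
    (B, C) ∈ ([({0,1},{0,1}), ({0},{1}), ({1},{0})] :
      List (Finset (Fin 3) × Finset (Fin 3))) := by decide

lemma cls2_ac : ∀ B C : Finset (Fin 3), B ≠ ∅ → C ≠ ∅ → B.card ≤ 2^1 → C.card ≤ 2^1 →
    fitchOp B C = {0,2} →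
    (B, C) ∈ ([({0,2},{0,2}), ({0},{2}), ({2},{0})] :
      List (Finset (Fin 3) × Finset (Fin 3))) := by decide

lemma cls2_t : ∀ B C : Finset (Fin 3), B ≠ ∅ → C ≠ ∅ → B.card ≤ 2^1 → C.card ≤ 2^1 →
    fitchOp B C = {0,1,2} →
    (B, C) ∈ ([({0},{1,2}), ({1,2},{0}), ({1},{0,2}), ({0,2},{1}), ({2},{0,1}),
      ({0,1},{2})] : List (Finset (Fin 3) × Finset (Fin 3))) := by decide

/-! base values at k = 0 -/

lemma g0_a : g 0 {0} = 1 := by simp [g, fCS]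
lemma g0_b : g 0 {1} = 0 := by simp [g, fCS]
lemma g0_c : g 0 {2} = 0 := by simp [g, fCS]
lemma g0_ab : g 0 {0,1} = 1 := by simp [g, fCS]
lemma g0_ac : g 0 {0,2} = 1 := by simp [g, fCS]
lemma g0_bc : g 0 {1,2} = 0 := by simp [g, fCS]
lemma g0_abc : g 0 {0,1,2} = 1 := by simp [g, fCS]


/-! zero values -/

lemma g_zero : ∀ k, 1 ≤ k → g k {1} = 0 ∧ g k {2} = 0 ∧ g k {1,2} = 0 := by
  intro k hk
  induction k, hk using Nat.le_induction with
  | base =>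
    refine ⟨Nat.le_zero.mp ?_, Nat.le_zero.mp ?_, Nat.le_zero.mp ?_⟩
    · have := g_le (k := 0) (singleton_nonempty (1:Fin 3)) (singleton_nonempty 1)
        (by decide) (by decide) (by decide : fitchOp ({1}:Finset (Fin 3)) {1} = {1})
      simpa [g0_b] using this
    · have := g_le (k := 0) (singleton_nonempty (2:Fin 3)) (singleton_nonempty 2)
        (by decide) (by decide) (by decide : fitchOp ({2}:Finset (Fin 3)) {2} = {2})
      simpa [g0_c] using this
    · have := g_le (k := 0) (singleton_nonempty (1:Fin 3)) (singleton_nonempty 2)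
        (by decide) (by decide) (by decide : fitchOp ({1}:Finset (Fin 3)) {2} = {1,2})
      simpa [g0_b, g0_c] using this
  | succ k hk ih =>
    obtain ⟨h1, h2, h3⟩ := ih
    have c1 : ({1}:Finset (Fin 3)).card ≤ 2^k := by
      simp only [card_singleton]; exact Nat.one_le_two_pow
    have c2 : ({2}:Finset (Fin 3)).card ≤ 2^k := by
      simp only [card_singleton]; exact Nat.one_le_two_pow
    have c3 : ({1,2}:Finset (Fin 3)).card ≤ 2^k := by
      have : ({1,2}:Finset (Fin 3)).card = 2 := by decide
      rw [this]
      calc (2:ℕ) = 2^1 := by norm_num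
      _ ≤ 2^k := Nat.pow_le_pow_right (by norm_num) hk
    refine ⟨Nat.le_zero.mp ?_, Nat.le_zero.mp ?_, Nat.le_zero.mp ?_⟩
    · have := g_le (k := k) (singleton_nonempty (1:Fin 3)) (singleton_nonempty 1)
        c1 c1 (by decide : fitchOp ({1}:Finset (Fin 3)) {1} = {1})
      simpa [h1] using this
    · have := g_le (k := k) (singleton_nonempty (2:Fin 3)) (singleton_nonempty 2)
        c2 c2 (by decide : fitchOp ({2}:Finset (Fin 3)) {2} = {2})
      simpa [h2] using this
    · have := g_le (k := k) (insert_nonempty _ _) (insert_nonempty _ _)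
        c3 c3 (by decide : fitchOp ({1,2}:Finset (Fin 3)) {1,2} = {1,2})
      simpa [h3] using this

/-! values at k = 1 -/

lemma g1_u : g 1 {0} = 2 := by
  have w1 := g_le (k := 0) (singleton_nonempty (0:Fin 3)) (singleton_nonempty 0)
    (by decide) (by decide) (by decide : fitchOp ({0}:Finset (Fin 3)) {0} = {0})
  obtain ⟨B, C, hBn, hCn, -, -, hf, heq⟩ := g_decomp (k := 0)
    (singleton_nonempty (0:Fin 3)) (singleton_nonempty 0)
    (by decide) (by decide) (by decide : fitchOp ({0}:Finset (Fin 3)) {0} = {0})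
  have h := cls_a B C hBn.ne_empty hCn.ne_empty hf
  simp only [List.mem_cons, List.not_mem_nil, or_false, Prod.mk.injEq] at h
  simp only [zero_add, Nat.reduceAdd] at w1 heq
  rw [g0_a] at w1
  rcases h with ⟨rfl,rfl⟩|⟨rfl,rfl⟩|⟨rfl,rfl⟩|⟨rfl,rfl⟩|⟨rfl,rfl⟩|⟨rfl,rfl⟩|⟨rfl,rfl⟩|⟨rfl,rfl⟩|⟨rfl,rfl⟩ <;>
    simp only [g0_a, g0_ab, g0_ac, g0_abc] at heq <;> omega

lemma g1_pb : g 1 {0,1} = 1 := by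
  have w1 := g_le (k := 0) (singleton_nonempty (0:Fin 3)) (singleton_nonempty 1)
    (by decide) (by decide) (by decide : fitchOp ({0}:Finset (Fin 3)) {1} = {0,1})
  obtain ⟨B, C, hBn, hCn, -, -, hf, heq⟩ := g_decomp (k := 0)
    (singleton_nonempty (0:Fin 3)) (singleton_nonempty 1)
    (by decide) (by decide) (by decide : fitchOp ({0}:Finset (Fin 3)) {1} = {0,1})
  have h := cls_ab B C hBn.ne_empty hCn.ne_empty hf
  simp only [List.mem_cons, List.not_mem_nil, or_false, Prod.mk.injEq] at h
  simp only [zero_add, Nat.reduceAdd] at w1 heq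
  rw [g0_a, g0_b] at w1
  rcases h with ⟨rfl,rfl⟩|⟨rfl,rfl⟩|⟨rfl,rfl⟩|⟨rfl,rfl⟩|⟨rfl,rfl⟩ <;>
    simp only [g0_a, g0_b, g0_ab, g0_abc, Nat.reduceAdd] at heq ⊢ <;> omega

lemma g1_pc : g 1 {0,2} = 1 := by
  have w1 := g_le (k := 0) (singleton_nonempty (0:Fin 3)) (singleton_nonempty 2)
    (by decide) (by decide) (by decide : fitchOp ({0}:Finset (Fin 3)) {2} = {0,2})
  obtain ⟨B, C, hBn, hCn, -, -, hf, heq⟩ := g_decomp (k := 0)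
    (singleton_nonempty (0:Fin 3)) (singleton_nonempty 2)
    (by decide) (by decide) (by decide : fitchOp ({0}:Finset (Fin 3)) {2} = {0,2})
  have h := cls_ac B C hBn.ne_empty hCn.ne_empty hf
  simp only [List.mem_cons, List.not_mem_nil, or_false, Prod.mk.injEq] at h
  simp only [zero_add, Nat.reduceAdd] at w1 heq
  rw [g0_a, g0_c] at w1
  rcases h with ⟨rfl,rfl⟩|⟨rfl,rfl⟩|⟨rfl,rfl⟩|⟨rfl,rfl⟩|⟨rfl,rfl⟩ <;>
    simp only [g0_a, g0_c, g0_ac, g0_abc, Nat.reduceAdd] at heq ⊢ <;> omega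

/-! values at k = 2 -/

lemma g2_u : g 2 {0} = 2 := by
  have w1 := g_le (k := 1) (insert_nonempty _ _) (insert_nonempty _ _)
    (by decide) (by decide) (by decide : fitchOp ({0,1}:Finset (Fin 3)) {0,2} = {0})
  obtain ⟨B, C, hBn, hCn, -, -, hf, heq⟩ := g_decomp (k := 1)
    (insert_nonempty _ _) (insert_nonempty _ _)
    (by decide) (by decide) (by decide : fitchOp ({0,1}:Finset (Fin 3)) {0,2} = {0})
  have h := cls_a B C hBn.ne_empty hCn.ne_empty hf
  simp only [List.mem_cons, List.not_mem_nil, or_false, Prod.mk.injEq] at h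
  simp only [g1_pb, g1_pc, Nat.reduceAdd] at w1 heq
  rcases h with ⟨rfl,rfl⟩|⟨rfl,rfl⟩|⟨rfl,rfl⟩|⟨rfl,rfl⟩|⟨rfl,rfl⟩|⟨rfl,rfl⟩|⟨rfl,rfl⟩|⟨rfl,rfl⟩|⟨rfl,rfl⟩ <;>
    simp only [g1_u, g1_pb, g1_pc, Nat.reduceAdd] at heq <;> omega

lemma g2_pb : g 2 {0,1} = 2 := by
  have hs1 := (g_zero 1 le_rfl).1
  have w1 := g_le (k := 1) (singleton_nonempty (0:Fin 3)) (singleton_nonempty 1)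
    (by decide) (by decide) (by decide : fitchOp ({0}:Finset (Fin 3)) {1} = {0,1})
  obtain ⟨B, C, hBn, hCn, hc1, hc2, hf, heq⟩ := g_decomp (k := 1)
    (singleton_nonempty (0:Fin 3)) (singleton_nonempty 1)
    (by decide) (by decide) (by decide : fitchOp ({0}:Finset (Fin 3)) {1} = {0,1})
  have h := cls2_ab B C hBn.ne_empty hCn.ne_empty hc1 hc2 hf
  simp only [List.mem_cons, List.not_mem_nil, or_false, Prod.mk.injEq] at h
  simp only [g1_u, hs1, Nat.reduceAdd] at w1 heq
  rcases h with ⟨rfl,rfl⟩|⟨rfl,rfl⟩|⟨rfl,rfl⟩ <;>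
    simp only [g1_u, g1_pb, hs1, Nat.reduceAdd] at heq <;> omega

lemma g2_pc : g 2 {0,2} = 2 := by
  have hs2 := (g_zero 1 le_rfl).2.1
  have w1 := g_le (k := 1) (singleton_nonempty (0:Fin 3)) (singleton_nonempty 2)
    (by decide) (by decide) (by decide : fitchOp ({0}:Finset (Fin 3)) {2} = {0,2})
  obtain ⟨B, C, hBn, hCn, hc1, hc2, hf, heq⟩ := g_decomp (k := 1)
    (singleton_nonempty (0:Fin 3)) (singleton_nonempty 2)
    (by decide) (by decide) (by decide : fitchOp ({0}:Finset (Fin 3)) {2} = {0,2})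
  have h := cls2_ac B C hBn.ne_empty hCn.ne_empty hc1 hc2 hf
  simp only [List.mem_cons, List.not_mem_nil, or_false, Prod.mk.injEq] at h
  simp only [g1_u, hs2, Nat.reduceAdd] at w1 heq
  rcases h with ⟨rfl,rfl⟩|⟨rfl,rfl⟩|⟨rfl,rfl⟩ <;>
    simp only [g1_u, g1_pc, hs2, Nat.reduceAdd] at heq <;> omega

lemma g2_t : g 2 {0,1,2} = 1 := by
  have hs1 := (g_zero 1 le_rfl).1
  have hs2 := (g_zero 1 le_rfl).2.1
  have hq := (g_zero 1 le_rfl).2.2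
  have w1 := g_le (k := 1) (singleton_nonempty (1:Fin 3)) (insert_nonempty _ _)
    (by decide) (by decide) (by decide : fitchOp ({1}:Finset (Fin 3)) {0,2} = {0,1,2})
  obtain ⟨B, C, hBn, hCn, hc1, hc2, hf, heq⟩ := g_decomp (k := 1)
    (singleton_nonempty (1:Fin 3)) (insert_nonempty _ _)
    (by decide) (by decide) (by decide : fitchOp ({1}:Finset (Fin 3)) {0,2} = {0,1,2})
  have h := cls2_t B C hBn.ne_empty hCn.ne_empty hc1 hc2 hf
  simp only [List.mem_cons, List.not_mem_nil, or_false, Prod.mk.injEq] at h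
  simp only [hs1, g1_pc, Nat.reduceAdd] at w1 heq
  rcases h with ⟨rfl,rfl⟩|⟨rfl,rfl⟩|⟨rfl,rfl⟩|⟨rfl,rfl⟩|⟨rfl,rfl⟩|⟨rfl,rfl⟩ <;>
    simp only [g1_u, g1_pb, g1_pc, hs1, hs2, hq, Nat.reduceAdd] at heq <;> omega

/-! step lemmas for k ≥ 2 -/

lemma step_u {k u p t : ℕ} (hk : 2 ≤ k) (hu : g k {0} = u) (hpb : g k {0,1} = p)
    (hpc : g k {0,2} = p) (ht : g k {0,1,2} = t) :
    g (k+1) {0} = min (min (2*u) (u+p)) (min (2*p) (u+t)) := by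
  have hc := card_le_pow hk
  have w1 := g_le (k := k) (singleton_nonempty (0:Fin 3)) (singleton_nonempty 0)
    (hc _) (hc _) (by decide : fitchOp ({0}:Finset (Fin 3)) {0} = {0})
  have w2 := g_le (k := k) (singleton_nonempty (0:Fin 3)) (insert_nonempty _ _)
    (hc _) (hc _) (by decide : fitchOp ({0}:Finset (Fin 3)) {0,1} = {0})
  have w3 := g_le (k := k) (insert_nonempty _ _) (insert_nonempty _ _)
    (hc _) (hc _) (by decide : fitchOp ({0,1}:Finset (Fin 3)) {0,2} = {0})
  have w4 := g_le (k := k) (singleton_nonempty (0:Fin 3)) (insert_nonempty _ _)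
    (hc _) (hc _) (by decide : fitchOp ({0}:Finset (Fin 3)) {0,1,2} = {0})
  obtain ⟨B, C, hBn, hCn, -, -, hf, heq⟩ := g_decomp (k := k)
    (singleton_nonempty (0:Fin 3)) (singleton_nonempty 0)
    (hc _) (hc _) (by decide : fitchOp ({0}:Finset (Fin 3)) {0} = {0})
  have h := cls_a B C hBn.ne_empty hCn.ne_empty hf
  simp only [List.mem_cons, List.not_mem_nil, or_false, Prod.mk.injEq] at h
  simp only [hu, hpb, hpc, ht] at w1 w2 w3 w4
  rcases h with ⟨rfl,rfl⟩|⟨rfl,rfl⟩|⟨rfl,rfl⟩|⟨rfl,rfl⟩|⟨rfl,rfl⟩|⟨rfl,rfl⟩|⟨rfl,rfl⟩|⟨rfl,rfl⟩|⟨rfl,rfl⟩ <;>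
    simp only [hu, hpb, hpc, ht] at heq <;> omega

lemma step_pb {k u p t : ℕ} (hk : 2 ≤ k) (hu : g k {0} = u) (hpb : g k {0,1} = p)
    (hs1 : g k {1} = 0) (ht : g k {0,1,2} = t) :
    g (k+1) {0,1} = min (min (2*p) (p+t)) u := by
  have hc := card_le_pow hk
  have w1 := g_le (k := k) (insert_nonempty _ _) (insert_nonempty _ _)
    (hc _) (hc _) (by decide : fitchOp ({0,1}:Finset (Fin 3)) {0,1} = {0,1})
  have w2 := g_le (k := k) (insert_nonempty _ _) (insert_nonempty _ _)
    (hc _) (hc _) (by decide : fitchOp ({0,1}:Finset (Fin 3)) {0,1,2} = {0,1})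
  have w4 := g_le (k := k) (singleton_nonempty (0:Fin 3)) (singleton_nonempty 1)
    (hc _) (hc _) (by decide : fitchOp ({0}:Finset (Fin 3)) {1} = {0,1})
  obtain ⟨B, C, hBn, hCn, -, -, hf, heq⟩ := g_decomp (k := k)
    (insert_nonempty _ _) (insert_nonempty _ _)
    (hc _) (hc _) (by decide : fitchOp ({0,1}:Finset (Fin 3)) {0,1} = {0,1})
  have h := cls_ab B C hBn.ne_empty hCn.ne_empty hf
  simp only [List.mem_cons, List.not_mem_nil, or_false, Prod.mk.injEq] at h
  simp only [hu, hpb, hs1, ht] at w1 w2 w4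
  rcases h with ⟨rfl,rfl⟩|⟨rfl,rfl⟩|⟨rfl,rfl⟩|⟨rfl,rfl⟩|⟨rfl,rfl⟩ <;>
    simp only [hu, hpb, hs1, ht] at heq <;> omega

lemma step_pc {k u p t : ℕ} (hk : 2 ≤ k) (hu : g k {0} = u) (hpc : g k {0,2} = p)
    (hs2 : g k {2} = 0) (ht : g k {0,1,2} = t) :
    g (k+1) {0,2} = min (min (2*p) (p+t)) u := by
  have hc := card_le_pow hk
  have w1 := g_le (k := k) (insert_nonempty _ _) (insert_nonempty _ _)
    (hc _) (hc _) (by decide : fitchOp ({0,2}:Finset (Fin 3)) {0,2} = {0,2})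
  have w2 := g_le (k := k) (insert_nonempty _ _) (insert_nonempty _ _)
    (hc _) (hc _) (by decide : fitchOp ({0,2}:Finset (Fin 3)) {0,1,2} = {0,2})
  have w4 := g_le (k := k) (singleton_nonempty (0:Fin 3)) (singleton_nonempty 2)
    (hc _) (hc _) (by decide : fitchOp ({0}:Finset (Fin 3)) {2} = {0,2})
  obtain ⟨B, C, hBn, hCn, -, -, hf, heq⟩ := g_decomp (k := k)
    (insert_nonempty _ _) (insert_nonempty _ _)
    (hc _) (hc _) (by decide : fitchOp ({0,2}:Finset (Fin 3)) {0,2} = {0,2})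
  have h := cls_ac B C hBn.ne_empty hCn.ne_empty hf
  simp only [List.mem_cons, List.not_mem_nil, or_false, Prod.mk.injEq] at h
  simp only [hu, hpc, hs2, ht] at w1 w2 w4
  rcases h with ⟨rfl,rfl⟩|⟨rfl,rfl⟩|⟨rfl,rfl⟩|⟨rfl,rfl⟩|⟨rfl,rfl⟩ <;>
    simp only [hu, hpc, hs2, ht] at heq <;> omega

lemma step_t {k u p t : ℕ} (hk : 2 ≤ k) (hu : g k {0} = u) (hpb : g k {0,1} = p)
    (hpc : g k {0,2} = p) (ht : g k {0,1,2} = t) (hs1 : g k {1} = 0)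
    (hs2 : g k {2} = 0) (hq : g k {1,2} = 0) :
    g (k+1) {0,1,2} = min (min u p) (2*t) := by
  have hc := card_le_pow hk
  have w1 := g_le (k := k) (singleton_nonempty (0:Fin 3)) (insert_nonempty _ _)
    (hc _) (hc _) (by decide : fitchOp ({0}:Finset (Fin 3)) {1,2} = {0,1,2})
  have w2 := g_le (k := k) (singleton_nonempty (1:Fin 3)) (insert_nonempty _ _)
    (hc _) (hc _) (by decide : fitchOp ({1}:Finset (Fin 3)) {0,2} = {0,1,2})
  have w3 := g_le (k := k) (insert_nonempty _ _) (insert_nonempty _ _)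
    (hc _) (hc _) (by decide : fitchOp ({0,1,2}:Finset (Fin 3)) {0,1,2} = {0,1,2})
  obtain ⟨B, C, hBn, hCn, -, -, hf, heq⟩ := g_decomp (k := k)
    (singleton_nonempty (0:Fin 3)) (insert_nonempty _ _)
    (hc _) (hc _) (by decide : fitchOp ({0}:Finset (Fin 3)) {1,2} = {0,1,2})
  have h := cls_t B C hBn.ne_empty hCn.ne_empty hf
  simp only [List.mem_cons, List.not_mem_nil, or_false, Prod.mk.injEq] at h
  simp only [hu, hpb, hpc, ht, hs1, hs2, hq] at w1 w2 w3
  rcases h with ⟨rfl,rfl⟩|⟨rfl,rfl⟩|⟨rfl,rfl⟩|⟨rfl,rfl⟩|⟨rfl,rfl⟩|⟨rfl,rfl⟩|⟨rfl,rfl⟩ <;>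
    simp only [hu, hpb, hpc, ht, hs1, hs2, hq] at heq <;> omega

/-! values at k = 3, 4, 5 -/

lemma g3_u : g 3 {0} = 3 := by
  have := step_u le_rfl g2_u g2_pb g2_pc g2_t; norm_num at this; exact this
lemma g3_pb : g 3 {0,1} = 2 := by
  have := step_pb le_rfl g2_u g2_pb (g_zero 2 (by norm_num)).1 g2_t
  norm_num at this; exact this
lemma g3_pc : g 3 {0,2} = 2 := by
  have := step_pc le_rfl g2_u g2_pc (g_zero 2 (by norm_num)).2.1 g2_t
  norm_num at this; exact this
lemma g3_t : g 3 {0,1,2} = 2 := by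
  have := step_t le_rfl g2_u g2_pb g2_pc g2_t (g_zero 2 (by norm_num)).1
    (g_zero 2 (by norm_num)).2.1 (g_zero 2 (by norm_num)).2.2
  norm_num at this; exact this

lemma g4_u : g 4 {0} = 4 := by
  have := step_u (by norm_num) g3_u g3_pb g3_pc g3_t; norm_num at this; exact this
lemma g4_pb : g 4 {0,1} = 3 := by
  have := step_pb (by norm_num) g3_u g3_pb (g_zero 3 (by norm_num)).1 g3_t
  norm_num at this; exact this
lemma g4_pc : g 4 {0,2} = 3 := by
  have := step_pc (by norm_num) g3_u g3_pc (g_zero 3 (by norm_num)).2.1 g3_t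
  norm_num at this; exact this
lemma g4_t : g 4 {0,1,2} = 2 := by
  have := step_t (by norm_num) g3_u g3_pb g3_pc g3_t (g_zero 3 (by norm_num)).1
    (g_zero 3 (by norm_num)).2.1 (g_zero 3 (by norm_num)).2.2
  norm_num at this; exact this

lemma g5_u : g 5 {0} = 6 := by
  have := step_u (by norm_num) g4_u g4_pb g4_pc g4_t; norm_num at this; exact this
lemma g5_pb : g 5 {0,1} = 4 := by
  have := step_pb (by norm_num) g4_u g4_pb (g_zero 4 (by norm_num)).1 g4_t
  norm_num at this; exact this
lemma g5_pc : g 5 {0,2} = 4 := by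
  have := step_pc (by norm_num) g4_u g4_pc (g_zero 4 (by norm_num)).2.1 g4_t
  norm_num at this; exact this
lemma g5_t : g 5 {0,1,2} = 3 := by
  have := step_t (by norm_num) g4_u g4_pb g4_pc g4_t (g_zero 4 (by norm_num)).1
    (g_zero 4 (by norm_num)).2.1 (g_zero 4 (by norm_num)).2.2
  norm_num at this; exact this

/-! the main induction -/

lemma main : ∀ m, 2 ≤ m →
    g (2*m) {0} = 2^m ∧ g (2*m) {0,1} = 3*2^(m-2) ∧ g (2*m) {0,2} = 3*2^(m-2) ∧
    g (2*m) {0,1,2} = 2^(m-1) ∧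
    g (2*m+1) {0} = 3*2^(m-1) ∧ g (2*m+1) {0,1} = 2^m ∧ g (2*m+1) {0,2} = 2^m ∧
    g (2*m+1) {0,1,2} = 3*2^(m-2) := by
  intro m hm
  induction m, hm using Nat.le_induction with
  | base =>
    norm_num
    exact ⟨g4_u, g4_pb, g4_pc, g4_t, g5_u, g5_pb, g5_pc, g5_t⟩
  | succ n hn ih =>
    obtain ⟨h1, h2, h3, h4, h5, h6, h7, h8⟩ := ih
    have hk1 : (2:ℕ) ≤ 2*n+1 := by omega
    have z := g_zero (2*n+1) (by omega)
    have u6 := step_u hk1 h5 h6 h7 h8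
    have p6 := step_pb hk1 h5 h6 z.1 h8
    have q6 := step_pc hk1 h5 h7 z.2.1 h8
    have t6 := step_t hk1 h5 h6 h7 h8 z.1 z.2.1 z.2.2
    have hx : 1 ≤ (2:ℕ)^(n-2) := Nat.one_le_two_pow
    have e1 : (2:ℕ)^((n-2)+1) = 2 * 2^(n-2) := by rw [pow_succ]; ring
    rw [show (n-2)+1 = n-1 by omega] at e1
    have e2 : (2:ℕ)^((n-2)+2) = 4 * 2^(n-2) := by rw [pow_add]; ring
    rw [show (n-2)+2 = n by omega] at e2
    have e3 : (2:ℕ)^((n-2)+3) = 8 * 2^(n-2) := by rw [pow_add]; ring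
    rw [show (n-2)+3 = n+1 by omega] at e3
    have U : g (2*n+1+1) {0} = 2^(n+1) := by rw [u6, e1, e2, e3]; omega
    have P : g (2*n+1+1) {0,1} = 3*2^(n-1) := by rw [p6, e1, e2]; omega
    have Q : g (2*n+1+1) {0,2} = 3*2^(n-1) := by rw [q6, e1, e2]; omega
    have T : g (2*n+1+1) {0,1,2} = 2^n := by rw [t6, e1, e2]; omega
    have hk2 : (2:ℕ) ≤ 2*n+1+1 := by omega
    have z2 := g_zero (2*n+1+1) (by omega)
    have u7 := step_u hk2 U P Q T
    have p7 := step_pb hk2 U P z2.1 T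
    have q7 := step_pc hk2 U Q z2.2.1 T
    have t7 := step_t hk2 U P Q T z2.1 z2.2.1 z2.2.2
    have U2 : g (2*n+1+1+1) {0} = 3*2^n := by rw [u7, e1, e2, e3]; omega
    have P2 : g (2*n+1+1+1) {0,1} = 2^(n+1) := by rw [p7, e1, e2, e3]; omega
    have Q2 : g (2*n+1+1+1) {0,2} = 2^(n+1) := by rw [q7, e1, e2, e3]; omega
    have T2 : g (2*n+1+1+1) {0,1,2} = 3*2^(n-1) := by rw [t7, e1, e2, e3]; omega
    have i1 : 2*(n+1) = 2*n+1+1 := by ring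
    have j1 : n+1-1 = n := by omega
    have j2 : n+1-2 = n-1 := by omega
    rw [i1, j1, j2]
    exact ⟨U, P, Q, T, U2, P2, Q2, T2⟩

/-! u-values in closed form -/

lemma gu_even : ∀ j, 1 ≤ j → g (2*j) {0} = 2^j := by
  intro j hj
  rcases eq_or_lt_of_le hj with h | h
  · rw [← h]; norm_num [g2_u]
  · exact (main j h).1

lemma gu_odd : ∀ j, 1 ≤ j → g (2*j+1) {0} = 3*2^(j-1) := by
  intro j hj
  rcases eq_or_lt_of_le hj with h | h
  · rw [← h]; norm_num [g3_u]
  · exact (main j h).2.2.2.2.1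

/-! transfer along an injective map -/

lemma fitchOp_image {α β : Type*} [DecidableEq α] [DecidableEq β] {e : β → α}
    (he : Function.Injective e) (B C : Finset β) :
    fitchOp (B.image e) (C.image e) = (fitchOp B C).image e := by
  unfold fitchOp
  rw [← Finset.image_inter _ _ he]
  by_cases h : (B ∩ C).Nonempty
  · rw [if_pos h, if_pos (h.image e)]
  · rw [if_neg h, if_neg (by simpa [Finset.image_nonempty] using h), Finset.image_union]

lemma fCS_image {α β : Type*} [DecidableEq α] [DecidableEq β] (e : β → α)
    (he : Function.Injective e) (b0 : β) (R : Finset β) :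
    ∀ (k : ℕ) (A : Finset β),
      fCS (e b0) (R.image e) k (A.image e) = fCS b0 R k A := by
  intro k
  induction k with
  | zero =>
    intro A
    simp only [fCS, Finset.mem_image, he.eq_iff]
    congr 1
    simp [eq_comm]
  | succ k ih =>
    intro A
    rw [fCS_succ, fCS_succ]
    congr 1
    ext n
    simp only [Set.mem_setOf_eq]
    constructor
    · rintro ⟨B', C', hB', hC', hBn', hCn', hBc', hCc', hf', hn'⟩
      obtain ⟨B, hBR, rfl⟩ := Finset.subset_image_iff.mp hB'
      obtain ⟨C, hCR, rfl⟩ := Finset.subset_image_iff.mp hC'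
      refine ⟨B, C, hBR, hCR, ?_, ?_, ?_, ?_, ?_, ?_⟩
      · exact Finset.image_nonempty.mp hBn'
      · exact Finset.image_nonempty.mp hCn'
      · rwa [Finset.card_image_of_injective _ he] at hBc'
      · rwa [Finset.card_image_of_injective _ he] at hCc'
      · apply Finset.image_injective he
        rw [← fitchOp_image he]; exact hf'
      · rw [hn', ih B, ih C]
    · rintro ⟨B, C, hBR, hCR, hBn, hCn, hBc, hCc, hf, hn⟩
      refine ⟨B.image e, C.image e, Finset.image_subset_image hBR,
        Finset.image_subset_image hCR, hBn.image e, hCn.image e, ?_, ?_, ?_, ?_⟩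
      · rwa [Finset.card_image_of_injective _ he]
      · rwa [Finset.card_image_of_injective _ he]
      · rw [fitchOp_image he, hf]
      · rw [hn, ih B, ih C]

end FitchAux


/-- auxiliary inequalities for r = 3: for all odd k ≥ 3,
2·f_{k-1} < f_k + f_{k-2} and 2·f_k = f_{k+1} + f_{k-1}. -/
theorem stmt_14 {α : Type*} [DecidableEq α] (a b c : α)
    (hab : a ≠ b) (hac : a ≠ c) (hbc : b ≠ c) :
    ∀ k, 3 ≤ k → Odd k →
      2 * fCS a ({a, b, c} : Finset α) (k - 1) {a} <
        fCS a ({a, b, c} : Finset α) k {a} +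
          fCS a ({a, b, c} : Finset α) (k - 2) {a} ∧
      2 * fCS a ({a, b, c} : Finset α) k {a} =
        fCS a ({a, b, c} : Finset α) (k + 1) {a} +
          fCS a ({a, b, c} : Finset α) (k - 1) {a} := by
  intro k hk3 hodd
  have e : Fin 3 → α := fun i => if i = 0 then a else if i = 1 then b else c
  set e' : Fin 3 → α := fun i => if i = 0 then a else if i = 1 then b else c with he'
  have he : Function.Injective e' := by
    intro i j hij
    fin_cases i <;> fin_cases j <;> simp_all [he'] <;> tauto
  have he0 : e' 0 = a := by simp [he']
  have hR : ({0,1,2} : Finset (Fin 3)).image e' = ({a,b,c} : Finset α) := by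
    rw [show ({0,1,2} : Finset (Fin 3)) = insert 0 (insert 1 {2}) from rfl]
    rw [Finset.image_insert, Finset.image_insert, Finset.image_singleton]
    simp [he']
  have key : ∀ (j : ℕ), fCS a ({a,b,c} : Finset α) j ({a} : Finset α) = FitchAux.g j {0} := by
    intro j
    have h := FitchAux.fCS_image e' he 0 {0,1,2} j {0}
    rw [hR, Finset.image_singleton, he0] at h
    exact h.trans rfl
  rw [key, key, key, key]
  obtain ⟨m, hm⟩ := hodd
  have hkm : k = 2*m+1 := by omega
  subst hkm
  have hm1 : 1 ≤ m := by omega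
  rcases eq_or_lt_of_le hm1 with h1 | h2
  · rw [← h1]
    norm_num
    rw [FitchAux.g2_u, FitchAux.g3_u, FitchAux.g1_u, FitchAux.g4_u]
    norm_num
  · have hm2 : 2 ≤ m := h2
    have A1 : FitchAux.g (2*m+1-1) {0} = 2^m := by
      rw [show 2*m+1-1 = 2*m by omega]; exact FitchAux.gu_even m (by omega)
    have A2 : FitchAux.g (2*m+1) {0} = 3*2^(m-1) := FitchAux.gu_odd m (by omega)
    have A3 : FitchAux.g (2*m+1-2) {0} = 3*2^(m-2) := by
      rw [show 2*m+1-2 = 2*(m-1)+1 by omega, FitchAux.gu_odd (m-1) (by omega),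
        show m-1-1 = m-2 by omega]
    have A4 : FitchAux.g (2*m+1+1) {0} = 2^(m+1) := by
      rw [show 2*m+1+1 = 2*(m+1) by ring, FitchAux.gu_even (m+1) (by omega)]
    rw [A1, A2, A3, A4]
    have hx : 1 ≤ (2:ℕ)^(m-2) := Nat.one_le_two_pow
    have e1 : (2:ℕ)^((m-2)+1) = 2 * 2^(m-2) := by rw [pow_succ]; ring
    rw [show (m-2)+1 = m-1 by omega] at e1
    have e2 : (2:ℕ)^((m-2)+2) = 4 * 2^(m-2) := by rw [pow_add]; ring
    rw [show (m-2)+2 = m by omega] at e2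
    have e3 : (2:ℕ)^((m-2)+3) = 8 * 2^(m-2) := by rw [pow_add]; ring
    rw [show (m-2)+3 = m+1 by omega] at e3
    rw [e1, e2, e3]
    omega
end

section
/- Binary case (Charleston–Steel): for r = 2, the minimum number of leaves of the fully bifurcating tree T_k of height k that must be assigned state a so that the Fitch root set equals {a} satisfies the Fibonacci recursion f_{k+1,2} = f_{k,2} + f_{k-1,2} for all k ≥ 1, with f_{0,2} = 1 and f_{1,2} = 2; hence f_{k,2} equals the (k+1)-st Fibonacci number (with F_1 = F_2 = 1). -/
open Finset

section Aux
variable {α : Type*} [DecidableEq α] {a b : α}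

lemma pair_cases {B : Finset α} (hB : B ⊆ {a, b}) (hne : B.Nonempty) :
    B = {a} ∨ B = {b} ∨ B = {a, b} := by
  by_cases ha : a ∈ B <;> by_cases hb : b ∈ B
  · right; right
    exact Finset.Subset.antisymm hB
      (by intro x hx; simp at hx; rcases hx with rfl|rfl <;> assumption)
  · left
    apply Finset.Subset.antisymm
    · intro x hx; have := hB hx; simp at this ⊢
      rcases this with rfl|rfl; · rfl
      · exact absurd hx hb
    · simpa using ha
  · right; left
    apply Finset.Subset.antisymm
    · intro x hx; have := hB hx; simp at this ⊢
      rcases this with rfl|rfl; · exact absurd hx ha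
      · rfl
    · simpa using hb
  · obtain ⟨x, hx⟩ := hne
    have := hB hx; simp at this
    rcases this with rfl|rfl <;> [exact absurd hx ha; exact absurd hx hb]

lemma op_aa : fitchOp ({a} : Finset α) {a} = {a} := by simp [fitchOp]
lemma op_bb : fitchOp ({b} : Finset α) {b} = {b} := by simp [fitchOp]
lemma op_ab (hab : a ≠ b) : fitchOp ({a} : Finset α) {b} = {a, b} := by
  rw [fitchOp, Finset.singleton_inter_of_notMem (by simpa using hab)]
  ext x; simp
lemma op_ba (hab : a ≠ b) : fitchOp ({b} : Finset α) {a} = {a, b} := by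
  rw [Finset.pair_comm, fitchOp,
    Finset.singleton_inter_of_notMem (by simpa using hab.symm)]
  ext x; simp
lemma op_aP : fitchOp ({a} : Finset α) {a, b} = {a} := by
  rw [fitchOp, Finset.singleton_inter_of_mem (by simp : a ∈ ({a, b} : Finset α))]
  simp
lemma op_Pa : fitchOp ({a, b} : Finset α) {a} = {a} := by
  rw [fitchOp, Finset.inter_comm,
    Finset.singleton_inter_of_mem (by simp : a ∈ ({a, b} : Finset α))]
  simp
lemma op_bP : fitchOp ({b} : Finset α) {a, b} = {b} := by
  rw [fitchOp, Finset.singleton_inter_of_mem (by simp : b ∈ ({a, b} : Finset α))]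
  simp
lemma op_Pb : fitchOp ({a, b} : Finset α) {b} = {b} := by
  rw [fitchOp, Finset.inter_comm,
    Finset.singleton_inter_of_mem (by simp : b ∈ ({a, b} : Finset α))]
  simp
lemma op_PP : fitchOp ({a, b} : Finset α) {a, b} = {a, b} := by
  rw [fitchOp, Finset.inter_self, if_pos ⟨a, by simp⟩]

lemma ne_Pa (hab : a ≠ b) : ({a, b} : Finset α) ≠ {a} := by
  intro h
  have : b ∈ ({a} : Finset α) := h ▸ (by simp : b ∈ ({a, b} : Finset α))
  simp at this; exact hab this.symm
lemma ne_Pb (hab : a ≠ b) : ({a, b} : Finset α) ≠ {b} := by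
  intro h
  have : a ∈ ({b} : Finset α) := h ▸ (by simp : a ∈ ({a, b} : Finset α))
  simp at this; exact hab this
lemma ne_sab (hab : a ≠ b) : ({b} : Finset α) ≠ {a} := by
  simpa [Finset.singleton_inj] using hab.symm

lemma fCS_vals (a b : α) (hab : a ≠ b) (k : ℕ) :
    fCS a ({a, b} : Finset α) k {a} = Nat.fib (k + 2) ∧
      fCS a ({a, b} : Finset α) k {b} = 0 ∧
      fCS a ({a, b} : Finset α) k {a, b} = Nat.fib (k + 1) := by
  have hba := hab.symm
  induction k with
  | zero =>
      refine ⟨?_, ?_, ?_⟩ <;> simp [fCS, hab, hba] <;> decide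
  | succ k ih =>
      obtain ⟨ihx, ihy, ihz⟩ := ih
      have hsubA : ({a} : Finset α) ⊆ {a, b} := by simp
      have hsubB : ({b} : Finset α) ⊆ {a, b} := by simp
      have hcard1a : ({a} : Finset α).card ≤ 2 ^ k := by
        simpa using Nat.one_le_pow k 2 (by norm_num)
      have hcard1b : ({b} : Finset α).card ≤ 2 ^ k := by
        simpa using Nat.one_le_pow k 2 (by norm_num)
      have hfibmono : Nat.fib (k + 1) ≤ Nat.fib (k + 2) := Nat.fib_le_fib_succ
      have hfibmono0 : Nat.fib k ≤ Nat.fib (k + 1) := Nat.fib_le_fib_succ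
      have hfib3 : Nat.fib (k + 3) = Nat.fib (k + 2) + Nat.fib (k + 1) := by
        rw [show k + 3 = (k + 1) + 2 from rfl, Nat.fib_add_two,
          show k + 1 + 1 = k + 2 from rfl]; omega
      have hfib2 : Nat.fib (k + 2) = Nat.fib (k + 1) + Nat.fib k := by
        rw [Nat.fib_add_two]; omega
      -- lower bound for {a}
      have lbx : ∀ n ∈ {n : ℕ | ∃ B C : Finset α, B ⊆ {a, b} ∧ C ⊆ {a, b} ∧
          B.Nonempty ∧ C.Nonempty ∧ B.card ≤ 2 ^ k ∧ C.card ≤ 2 ^ k ∧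
          fitchOp B C = {a} ∧ n = fCS a {a, b} k B + fCS a {a, b} k C},
          Nat.fib (k + 3) ≤ n := by
        rintro n ⟨B, C, hB, hC, hBne, hCne, -, -, hop, rfl⟩
        rcases pair_cases hB hBne with rfl | rfl | rfl <;>
          rcases pair_cases hC hCne with rfl | rfl | rfl
        · rw [ihx]; omega
        · rw [op_ab hab] at hop; exact absurd hop (ne_Pa hab)
        · rw [ihx, ihz]; omega
        · rw [op_ba hab] at hop; exact absurd hop (ne_Pa hab)
        · rw [op_bb] at hop; exact absurd hop (ne_sab hab)
        · rw [op_bP] at hop; exact absurd hop (ne_sab hab)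
        · rw [ihz, ihx]; omega
        · rw [op_Pb] at hop; exact absurd hop (ne_sab hab)
        · rw [op_PP] at hop; exact absurd hop (ne_Pa hab)
      -- lower bound for {a,b}
      have lbz : ∀ n ∈ {n : ℕ | ∃ B C : Finset α, B ⊆ {a, b} ∧ C ⊆ {a, b} ∧
          B.Nonempty ∧ C.Nonempty ∧ B.card ≤ 2 ^ k ∧ C.card ≤ 2 ^ k ∧
          fitchOp B C = {a, b} ∧ n = fCS a {a, b} k B + fCS a {a, b} k C},
          Nat.fib (k + 2) ≤ n := by
        rintro n ⟨B, C, hB, hC, hBne, hCne, -, -, hop, rfl⟩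
        rcases pair_cases hB hBne with rfl | rfl | rfl <;>
          rcases pair_cases hC hCne with rfl | rfl | rfl
        · rw [op_aa] at hop; exact absurd hop.symm (ne_Pa hab)
        · rw [ihx, ihy]; omega
        · rw [op_aP] at hop; exact absurd hop.symm (ne_Pa hab)
        · rw [ihy, ihx]; omega
        · rw [op_bb] at hop; exact absurd hop.symm (ne_Pb hab)
        · rw [op_bP] at hop; exact absurd hop.symm (ne_Pb hab)
        · rw [op_Pa] at hop; exact absurd hop.symm (ne_Pa hab)
        · rw [op_Pb] at hop; exact absurd hop.symm (ne_Pb hab)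
        · rw [ihz]; omega
      refine ⟨?_, ?_, ?_⟩
      · show fCS a ({a, b} : Finset α) (k + 1) {a} = Nat.fib (k + 3)
        rw [fCS]
        apply le_antisymm
        · rcases Nat.eq_zero_or_pos k with rfl | hk
          · apply Nat.sInf_le
            refine ⟨{a}, {a}, hsubA, hsubA, ⟨a, by simp⟩, ⟨a, by simp⟩, hcard1a, hcard1a,
              op_aa, ?_⟩
            rw [ihx]; decide
          · apply Nat.sInf_le
            refine ⟨{a}, {a, b}, hsubA, le_refl _, ⟨a, by simp⟩, ⟨a, by simp⟩, hcard1a,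
              ?_, op_aP, by rw [ihx, ihz, hfib3]⟩
            calc ({a, b} : Finset α).card ≤ 2 := by
                  simpa using Finset.card_insert_le a {b}
              _ = 2 ^ 1 := rfl
              _ ≤ 2 ^ k := Nat.pow_le_pow_right (by norm_num) hk
        · exact le_csInf ⟨_, {a}, {a}, hsubA, hsubA, ⟨a, by simp⟩, ⟨a, by simp⟩,
            hcard1a, hcard1a, op_aa, rfl⟩ lbx
      · rw [fCS]
        have h0 : (0 : ℕ) ∈ {n : ℕ | ∃ B C : Finset α, B ⊆ {a, b} ∧ C ⊆ {a, b} ∧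
            B.Nonempty ∧ C.Nonempty ∧ B.card ≤ 2 ^ k ∧ C.card ≤ 2 ^ k ∧
            fitchOp B C = {b} ∧ n = fCS a {a, b} k B + fCS a {a, b} k C} :=
          ⟨{b}, {b}, hsubB, hsubB, ⟨b, by simp⟩, ⟨b, by simp⟩, hcard1b, hcard1b,
            op_bb, by rw [ihy]⟩
        exact Nat.eq_zero_of_le_zero (Nat.sInf_le h0)
      · show fCS a ({a, b} : Finset α) (k + 1) {a, b} = Nat.fib (k + 2)
        rw [fCS]
        apply le_antisymm
        · apply Nat.sInf_le
          exact ⟨{a}, {b}, hsubA, hsubB, ⟨a, by simp⟩, ⟨b, by simp⟩, hcard1a, hcard1b,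
            op_ab hab, by rw [ihx, ihy]; omega⟩
        · exact le_csInf ⟨_, {a}, {b}, hsubA, hsubB, ⟨a, by simp⟩, ⟨b, by simp⟩,
            hcard1a, hcard1b, op_ab hab, rfl⟩ lbz

end Aux

/-- binary case (Charleston–Steel): for r = 2, f_{k,2} satisfies
the Fibonacci recursion f_{k+1,2} = f_{k,2} + f_{k-1,2} (k ≥ 1) with
f_{0,2} = 1 and f_{1,2} = 2; hence f_{k,2} is a Fibonacci number, namely
Nat.fib (k + 2) (with Nat.fib 1 = Nat.fib 2 = 1, i.e. F_1 = F_2 = 1). -/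
theorem stmt_19 {α : Type*} [DecidableEq α] (a b : α) (hab : a ≠ b) :
    (∀ k, 1 ≤ k →
      fCS a ({a, b} : Finset α) (k + 1) {a} =
        fCS a ({a, b} : Finset α) k {a} +
          fCS a ({a, b} : Finset α) (k - 1) {a}) ∧
    fCS a ({a, b} : Finset α) 0 {a} = 1 ∧
    fCS a ({a, b} : Finset α) 1 {a} = 2 ∧
    (∀ k, fCS a ({a, b} : Finset α) k {a} = Nat.fib (k + 2)) := by
  have key : ∀ k, fCS a ({a, b} : Finset α) k {a} = Nat.fib (k + 2) :=
    fun k => (fCS_vals a b hab k).1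
  refine ⟨?_, ?_, ?_, key⟩
  · intro k hk
    obtain ⟨m, rfl⟩ := Nat.exists_eq_add_of_le hk
    rw [key, key, key,
      show 1 + m + 1 + 2 = m + 2 + 2 from by omega,
      show 1 + m + 2 = m + 3 from by omega,
      show 1 + m - 1 + 2 = m + 2 from by omega,
      Nat.fib_add_two, show m + 2 + 1 = m + 3 from rfl]
    omega
  · rw [key]; decide
  · rw [key]; decide
end
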